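/- arXiv:1610.04930 — 2 statements merged into one kernel-verified Lean document; each statement's English description precedes it below -/
import Mathlib

section
/- Let p₀: ℝ² → ℝ satisfy p₀(R₆₀ x) = p₀(x) for all x ∈ ℝ², and suppose that for each x ∈ ℝ² the families (exp(i K·v) p₀(x − v)) indexed by v ∈ Λ_A, respectively by v ∈ Λ_B, are absolutely summable (for instance p₀ continuous with compact support). Define P_A(x) = Σ_{v ∈ Λ_A} exp(i K·v) p₀(x − v) and P_B(x) = Σ_{v ∈ Λ_B} exp(i K·v) p₀(x − v). Then ℛ[P_A] = τ P_A and ℛ[P_B] = conj(τ) P_B; moreover P_I(x + u) = exp(i K·u) P_I(x) for I ∈ {A, B}, all u ∈ Λ_h and all x ∈ ℝ². -/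
noncomputable section

open scoped Real

/-- The plane `ℝ²` with the Euclidean norm. -/
abbrev V2 : Type := EuclideanSpace ℝ (Fin 2)

/-- The vector `(a, b) ∈ ℝ²`. -/
def vec (a b : ℝ) : V2 := WithLp.toLp 2 ![a, b]

/-- The dot product on `ℝ²`. -/
def dot (a b : V2) : ℝ := a 0 * b 0 + a 1 * b 1

/-- `v₁ = (√3/2, 1/2)`. -/
def v1 : V2 := vec (Real.sqrt 3 / 2) (1 / 2)

/-- `v₂ = (√3/2, −1/2)`. -/
def v2 : V2 := vec (Real.sqrt 3 / 2) (-(1 / 2))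

/-- The lattice point `m₁ v₁ + m₂ v₂` of `Λ_h`. -/
def lat (m : ℤ × ℤ) : V2 := (m.1 : ℝ) • v1 + (m.2 : ℝ) • v2

/-- `k₁ = 2π(1/√3, 1)`. -/
def dk1 : V2 := vec (2 * π / Real.sqrt 3) (2 * π)

/-- `k₂ = 2π(1/√3, −1)`. -/
def dk2 : V2 := vec (2 * π / Real.sqrt 3) (-(2 * π))

/-- The dual lattice point `m₁ k₁ + m₂ k₂` of `Λ_h*`. -/
def dlat (m : ℤ × ℤ) : V2 := (m.1 : ℝ) • dk1 + (m.2 : ℝ) • dk2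

/-- `K = (0, 4π/3)`. -/
def KK : V2 := vec 0 (4 * π / 3)

/-- Clockwise rotation by `2π/3` about the origin (the matrix `R`). -/
def rotR (x : V2) : V2 :=
  vec (-(1/2) * x 0 + (Real.sqrt 3 / 2) * x 1) (-(Real.sqrt 3 / 2) * x 0 - (1/2) * x 1)

/-- The transpose `Rᵀ`. -/
def rotRT (x : V2) : V2 :=
  vec (-(1/2) * x 0 - (Real.sqrt 3 / 2) * x 1) ((Real.sqrt 3 / 2) * x 0 - (1/2) * x 1)

/-- Clockwise rotation by `π/3` about the origin (the matrix `R₆₀`). -/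
def rot60 (x : V2) : V2 :=
  vec ((1/2) * x 0 + (Real.sqrt 3 / 2) * x 1) (-(Real.sqrt 3 / 2) * x 0 + (1/2) * x 1)

/-- `e_{A,1} = (1/√3, 0)`. -/
def eA1 : V2 := vec (1 / Real.sqrt 3) 0

/-- `e_{A,ν} = R^{ν−1} e_{A,1}` for `ν = 1, 2, 3` (indexed by `Fin 3`). -/
def eA (ν : Fin 3) : V2 := rotR^[(ν : ℕ)] eA1

/-- `e_{B,ν} = −e_{A,ν}`. -/
def eB (ν : Fin 3) : V2 := -eA ν

/-- `e_{I,ν}` for `I ∈ {A, B}` (`true ↦ A`, `false ↦ B`). -/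
def eVec (I : Bool) (ν : Fin 3) : V2 := if I then eA ν else eB ν

/-- `γ(k) = Σ_{ν=1}^3 exp(i k·e_{B,ν})`. -/
def gam (k : V2) : ℂ := ∑ ν : Fin 3, Complex.exp (Complex.I * (dot k (eB ν)))

/-- `W_TB(k) = |γ(k)|`. -/
def Wtb (k : V2) : ℝ := ‖gam k‖

/-- `v_B = (1/√3, 0)`. -/
def vB : V2 := vec (1 / Real.sqrt 3) 0

/-- The hexagon center `x_c = (1/(2√3), −1/2)`. -/
def xc : V2 := vec (1 / (2 * Real.sqrt 3)) (-(1 / 2))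

/-- The rotation operator `ℛ[f](x) = f(x_c + Rᵀ(x − x_c))`. -/
def Rop (f : V2 → ℂ) (x : V2) : ℂ := f (xc + rotRT (x - xc))

/-- `τ = exp(2πi/3)`. -/
def tau : ℂ := Complex.exp (2 * (π : ℂ) * Complex.I / 3)

/-- The Euclidean norm of an integer pair. -/
def znorm (m : ℤ × ℤ) : ℝ := Real.sqrt ((m.1 : ℝ) ^ 2 + (m.2 : ℝ) ^ 2)

/-- `N_bad(w) = {m ∈ ℤ² : |w + m₁v₁ + m₂v₂| = 1/√3}`. -/
def Nbad (w : V2) : Set (ℤ × ℤ) := {m | ‖w + lat m‖ = 1 / Real.sqrt 3}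

/-- The `i`-th standard basis vector of `ℝ²`. -/
def basis2 (i : Fin 2) : V2 := EuclideanSpace.single i 1

/-- Partial derivative `∂_i f` of a complex-valued function on `ℝ²`. -/
def pd (i : Fin 2) (f : V2 → ℂ) : V2 → ℂ := fun x => fderiv ℝ f x (basis2 i)

/-- The Laplacian `Δf = ∂₁²f + ∂₂²f` of a complex-valued function on `ℝ²`. -/
def lap (f : V2 → ℂ) (x : V2) : ℂ :=
  ∑ i : Fin 2, fderiv ℝ (fun y => fderiv ℝ f y (basis2 i)) x (basis2 i)

/-- The radial profile of the fundamental solution of `−Δ + 1` on `ℝ²`: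
`𝒦(r) = (2π)⁻¹ e^{−r} ∫₀^∞ e^{−ζ} ζ^{−1/2} (2r + ζ)^{−1/2} dζ`. -/
def Kker (r : ℝ) : ℝ :=
  (2 * π)⁻¹ * Real.exp (-r) *
    ∫ ζ in Set.Ioi (0 : ℝ), Real.exp (-ζ) * ζ ^ (-(1/2 : ℝ)) * (2 * r + ζ) ^ (-(1/2 : ℝ))

/-- The approximate Floquet–Bloch mode `P_A(x) = Σ_{v ∈ Λ_A} exp(i K·v) p₀(x − v)`. -/
def modePA (p₀ : V2 → ℝ) (x : V2) : ℂ :=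
  ∑' m : ℤ × ℤ, Complex.exp (Complex.I * (dot KK (lat m))) * (p₀ (x - lat m) : ℂ)

/-- The approximate Floquet–Bloch mode `P_B(x) = Σ_{v ∈ Λ_B} exp(i K·v) p₀(x − v)`. -/
def modePB (p₀ : V2 → ℝ) (x : V2) : ℂ :=
  ∑' m : ℤ × ℤ, Complex.exp (Complex.I * (dot KK (vB + lat m))) * (p₀ (x - (vB + lat m)) : ℂ)

/-!
Both modes are lattice sums `Σₘ e^{iK·w(m)} p₀(x − w(m))` over a translate `{w(m)}` of `Λ_h`.
Translating `x` by `lat u` reindexes the sum by `m ↦ m − u` and pulls out the phase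
`e^{iK·lat u}`. The rotation `y ↦ x_c + R(y − x_c)` about the hexagon centre maps `Λ_A` and `Λ_B`
onto themselves, and `p₀` is `R`-invariant because `R = R₆₀²`; so `ℛ` also just reindexes the sum,
and the phase changes by a constant factor because `K · Λ_h ⊆ (2π/3)ℤ`: by `τ` on `Λ_A` and by
`conj τ = τ⁻¹` on `Λ_B`.
-/

theorem tsum_eq_mul_tsum_of_equiv {α β R : Type*} [DivisionSemiring R] [TopologicalSpace R]
    [IsTopologicalSemiring R] [T2Space R] (e : α ≃ β) {f : α → R} {g : β → R} {c : R}
    (h : ∀ a, f a = c * g (e a)) : ∑' a, f a = c * ∑' b, g b := by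
  rw [tsum_congr h, tsum_mul_left, e.tsum_eq g]

lemma sqrt_three_sq : Real.sqrt 3 ^ 2 = 3 := Real.sq_sqrt (by norm_num)

lemma sqrt_three_ne_zero : Real.sqrt 3 ≠ 0 := by positivity

lemma vec_apply_zero (a b : ℝ) : vec a b 0 = a := rfl

lemma vec_apply_one (a b : ℝ) : vec a b 1 = b := rfl

lemma V2.ext_coords {x y : V2} (h0 : x 0 = y 0) (h1 : x 1 = y 1) : x = y := by
  ext i
  fin_cases i <;> assumption

lemma dot_add_right (a b c : V2) : dot a (b + c) = dot a b + dot a c := by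
  simp only [dot, PiLp.add_apply]
  ring

lemma lat_add (m u : ℤ × ℤ) : lat (m + u) = lat m + lat u := by
  simp only [lat, Prod.fst_add, Prod.snd_add, Int.cast_add]
  module

lemma rot60_rot60 (y : V2) : rot60 (rot60 y) = rotR y := by
  apply V2.ext_coords <;> simp only [rot60, rotR, vec_apply_zero, vec_apply_one] <;>
    grind [sqrt_three_sq]

def rotAbout (y : V2) : V2 := xc + rotR (y - xc)

lemma rotR_Rop_arg (x y : V2) : rotR (xc + rotRT (x - xc) - y) = x - rotAbout y := by
  apply V2.ext_coords <;>
    simp only [rotAbout, rotR, rotRT, vec_apply_zero, vec_apply_one, PiLp.add_apply,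
      PiLp.sub_apply] <;>
    grind [sqrt_three_sq]

def rotIndexA : ℤ × ℤ ≃ ℤ × ℤ where
  toFun m := (-m.1 - m.2, m.1 + 1)
  invFun m := (m.2 - 1, -m.1 - m.2 + 1)
  left_inv m := by ext <;> simp only <;> omega
  right_inv m := by ext <;> simp only <;> omega

def rotIndexB : ℤ × ℤ ≃ ℤ × ℤ where
  toFun m := (-m.1 - m.2 - 1, m.1 + 1)
  invFun m := (m.2 - 1, -m.1 - m.2)
  left_inv m := by ext <;> simp only <;> omega
  right_inv m := by ext <;> simp only <;> omega

lemma rotAbout_lat (m : ℤ × ℤ) : rotAbout (lat m) = lat (rotIndexA m) := by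
  apply V2.ext_coords <;>
    simp only [rotAbout, rotIndexA, rotR, xc, lat, v1, v2, vec_apply_zero, vec_apply_one,
      PiLp.add_apply, PiLp.sub_apply, PiLp.smul_apply, smul_eq_mul, Equiv.coe_fn_mk] <;>
    push_cast <;> grind [sqrt_three_sq, sqrt_three_ne_zero]

lemma rotAbout_vB_add_lat (m : ℤ × ℤ) : rotAbout (vB + lat m) = vB + lat (rotIndexB m) := by
  apply V2.ext_coords <;>
    simp only [rotAbout, rotIndexB, rotR, xc, vB, lat, v1, v2, vec_apply_zero, vec_apply_one,
      PiLp.add_apply, PiLp.sub_apply, PiLp.smul_apply, smul_eq_mul, Equiv.coe_fn_mk] <;>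
    push_cast <;> grind [sqrt_three_sq, sqrt_three_ne_zero]

lemma dot_KK_lat (m : ℤ × ℤ) : dot KK (lat m) = 2 * π / 3 * (m.1 - m.2) := by
  simp only [dot, KK, lat, v1, v2, vec_apply_zero, vec_apply_one, PiLp.add_apply,
    PiLp.smul_apply, smul_eq_mul]
  ring

lemma dot_KK_vB : dot KK vB = 0 := by
  simp only [dot, KK, vB, vec_apply_zero, vec_apply_one]
  ring

lemma tau_ne_zero : tau ≠ 0 := Complex.exp_ne_zero _

lemma tau_pow_three : tau ^ 3 = 1 := by
  rw [tau, ← Complex.exp_nat_mul, ← Complex.exp_two_pi_mul_I]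
  congr 1
  push_cast
  ring

lemma tau_zpow_eq_of_modEq {a b : ℤ} (h : a ≡ b [ZMOD 3]) : tau ^ a = tau ^ b := by
  obtain ⟨k, hk⟩ := Int.modEq_iff_dvd.mp h
  rw [show b = a + 3 * k by omega, zpow_add₀ tau_ne_zero, zpow_mul, zpow_ofNat, tau_pow_three,
    one_zpow, mul_one]

lemma conj_tau : (starRingEnd ℂ) tau = tau⁻¹ := by
  rw [tau, ← Complex.exp_conj, ← Complex.exp_neg]
  congr 1
  simp only [map_div₀, map_mul, map_ofNat, Complex.conj_ofReal, Complex.conj_I]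
  ring

lemma exp_I_dot_KK_lat (m : ℤ × ℤ) :
    Complex.exp (Complex.I * (dot KK (lat m))) = tau ^ (m.1 - m.2) := by
  rw [dot_KK_lat, tau, ← Complex.exp_int_mul]
  congr 1
  push_cast
  ring

lemma exp_I_dot_KK_lat_rotIndexA (m : ℤ × ℤ) :
    Complex.exp (Complex.I * (dot KK (lat m))) =
      tau * Complex.exp (Complex.I * (dot KK (lat (rotIndexA m)))) := by
  rw [exp_I_dot_KK_lat, exp_I_dot_KK_lat, ← zpow_one_add₀ tau_ne_zero]
  apply tau_zpow_eq_of_modEq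
  simp only [rotIndexA, Equiv.coe_fn_mk, Int.ModEq]
  omega

lemma exp_I_dot_KK_vB_add_lat_rotIndexB (m : ℤ × ℤ) :
    Complex.exp (Complex.I * (dot KK (vB + lat m))) =
      (starRingEnd ℂ) tau * Complex.exp (Complex.I * (dot KK (vB + lat (rotIndexB m)))) := by
  rw [dot_add_right, dot_add_right, dot_KK_vB, zero_add, zero_add, exp_I_dot_KK_lat,
    exp_I_dot_KK_lat, conj_tau, ← zpow_neg_one, ← zpow_add₀ tau_ne_zero]
  apply tau_zpow_eq_of_modEq
  simp only [rotIndexB, Equiv.coe_fn_mk, Int.ModEq]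
  omega

section BlochSum

def blochSum (w : ℤ × ℤ → V2) (p₀ : V2 → ℝ) (x : V2) : ℂ :=
  ∑' m : ℤ × ℤ, Complex.exp (Complex.I * (dot KK (w m))) * (p₀ (x - w m) : ℂ)

variable {w : ℤ × ℤ → V2} {p₀ : V2 → ℝ}

lemma blochSum_add_lat (hw : ∀ m u, w (m + u) = w m + lat u) (x : V2) (u : ℤ × ℤ) :
    blochSum w p₀ (x + lat u) = Complex.exp (Complex.I * (dot KK (lat u))) * blochSum w p₀ x := by
  refine tsum_eq_mul_tsum_of_equiv (Equiv.subRight u) fun m => ?_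
  have hm : w m = w (m - u) + lat u := by rw [← hw, sub_add_cancel]
  rw [hm, dot_add_right, Complex.ofReal_add, mul_add, Complex.exp_add, add_sub_add_right_eq_sub,
    Equiv.subRight_apply]
  ring

lemma Rop_blochSum (hp : ∀ y, p₀ (rotR y) = p₀ y) {σ : ℤ × ℤ ≃ ℤ × ℤ}
    (hsite : ∀ m, rotAbout (w m) = w (σ m)) {c : ℂ}
    (hphase : ∀ m, Complex.exp (Complex.I * (dot KK (w m))) =
      c * Complex.exp (Complex.I * (dot KK (w (σ m))))) (x : V2) :
    Rop (blochSum w p₀) x = c * blochSum w p₀ x :=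
  tsum_eq_mul_tsum_of_equiv σ fun m => by
    rw [← hp, rotR_Rop_arg, hsite, hphase, mul_assoc]

end BlochSum

theorem statement8_general (p₀ : V2 → ℝ) (hsym : ∀ x : V2, p₀ (rot60 x) = p₀ x) :
    (∀ x : V2, Rop (modePA p₀) x = tau * modePA p₀ x) ∧
    (∀ x : V2, Rop (modePB p₀) x = (starRingEnd ℂ) tau * modePB p₀ x) ∧
    (∀ x : V2, ∀ u : ℤ × ℤ,
      modePA p₀ (x + lat u) = Complex.exp (Complex.I * (dot KK (lat u))) * modePA p₀ x) ∧
    (∀ x : V2, ∀ u : ℤ × ℤ,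
      modePB p₀ (x + lat u) = Complex.exp (Complex.I * (dot KK (lat u))) * modePB p₀ x) := by
  have hR : ∀ y, p₀ (rotR y) = p₀ y := fun y => by rw [← rot60_rot60, hsym, hsym]
  have hB : ∀ m u, vB + lat (m + u) = vB + lat m + lat u := fun m u => by
    rw [lat_add, add_assoc]
  exact ⟨Rop_blochSum (w := lat) hR rotAbout_lat exp_I_dot_KK_lat_rotIndexA,
    Rop_blochSum (w := (vB + lat ·)) hR rotAbout_vB_add_lat exp_I_dot_KK_vB_add_lat_rotIndexB,
    blochSum_add_lat (w := lat) lat_add, blochSum_add_lat (w := (vB + lat ·)) hB⟩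

/-- If `p₀` is `R₆₀`-invariant and the defining families are absolutely
summable, then `ℛ[P_A] = τ P_A`, `ℛ[P_B] = conj(τ) P_B`, and `P_A, P_B` are
`K`-pseudo-periodic. -/
theorem statement8 (p₀ : V2 → ℝ) (hsym : ∀ x : V2, p₀ (rot60 x) = p₀ x)
    (hsumA : ∀ x : V2, Summable (fun m : ℤ × ℤ =>
      ‖Complex.exp (Complex.I * (dot KK (lat m))) * (p₀ (x - lat m) : ℂ)‖))
    (hsumB : ∀ x : V2, Summable (fun m : ℤ × ℤ =>
      ‖Complex.exp (Complex.I * (dot KK (vB + lat m))) * (p₀ (x - (vB + lat m)) : ℂ)‖)) :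
    (∀ x : V2, Rop (modePA p₀) x = tau * modePA p₀ x) ∧
    (∀ x : V2, Rop (modePB p₀) x = (starRingEnd ℂ) tau * modePB p₀ x) ∧
    (∀ x : V2, ∀ u : ℤ × ℤ,
      modePA p₀ (x + lat u) = Complex.exp (Complex.I * (dot KK (lat u))) * modePA p₀ x) ∧
    (∀ x : V2, ∀ u : ℤ × ℤ,
      modePB p₀ (x + lat u) = Complex.exp (Complex.I * (dot KK (lat u))) * modePB p₀ x) :=
  statement8_general p₀ hsym
end
end

section
/- Let V: ℝ² → ℝ be continuous and satisfy V(x_c + Rᵀ(x − x_c)) = V(x) for all x, let K⋆ ∈ ℝ² satisfy RK⋆ − K⋆ ∈ Λ_h*, and let κ ∈ ℝ² and E ∈ ℝ. Suppose ψ: ℝ² → ℂ is twice continuously differentiable, satisfies −Δψ + Vψ = Eψ on ℝ², and ψ(x + v) = exp(i (K⋆ + κ)·v) ψ(x) for all x ∈ ℝ² and v ∈ Λ_h. Then ψ̃ := ℛ[ψ] is twice continuously differentiable, satisfies −Δψ̃ + Vψ̃ = Eψ̃ on ℝ², and ψ̃(x + v) = exp(i (K⋆ + Rκ)·v) ψ̃(x)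 for all x ∈ ℝ² and v ∈ Λ_h. Thus rotation by 2π/3 about x_c carries (K⋆ + κ)-pseudo-periodic eigenfunctions with eigenvalue E to (K⋆ + Rκ)-pseudo-periodic eigenfunctions with the same eigenvalue. -/
noncomputable section

open scoped Real

/-!
The map `x ↦ x_c + Rᵀ(x − x_c)` is a rigid motion. By hypothesis it preserves `V`, and it
commutes with `Δ`: by the chain rule the Laplacian of `ψ ∘ (affine map)` is the trace of the
Hessian of `ψ` taken in the rotated basis `Rᵀe₁, Rᵀe₂`, which is again the trace. For the
Bloch condition, translating `x` by `v ∈ Λ_h` translates the image by `Rᵀv ∈ Λ_h`, producing the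
phase `(K⋆ + κ)·Rᵀv = (RK⋆ + Rκ)·v`; as `RK⋆ − K⋆ ∈ Λ_h*`, this is `(K⋆ + Rκ)·v` modulo `2π`.
-/

section SecondDerivatives

variable {E F G : Type*} [NormedAddCommGroup E] [NormedSpace ℝ E]
  [NormedAddCommGroup F] [NormedSpace ℝ F] [NormedAddCommGroup G] [NormedSpace ℝ G]

lemma fderiv_apply_const_apply {c : E → F →L[ℝ] G} {x : E} (hc : DifferentiableAt ℝ c x)
    (v : F) (w : E) : fderiv ℝ (fun y => c y v) x w = fderiv ℝ c x w v := by
  rw [fderiv_clm_apply hc (differentiableAt_const v)]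
  simp

lemma fderiv_comp_affine_apply {h : F → G} (L : E →L[ℝ] F) (b : F) {x : E}
    (hh : DifferentiableAt ℝ h (L x + b)) (w : E) :
    fderiv ℝ (fun y => h (L y + b)) x w = fderiv ℝ h (L x + b) (L w) := by
  have hcomp : HasFDerivAt (fun y => h (L y + b)) ((fderiv ℝ h (L x + b)).comp L) x :=
    hh.hasFDerivAt.comp x (L.hasFDerivAt.add_const b)
  rw [hcomp.fderiv]
  rfl

end SecondDerivatives

lemma lap_comp_affine {f : V2 → ℂ} (hf : ContDiff ℝ 2 f) (L : V2 →L[ℝ] V2) (b x : V2) :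
    lap (fun y => f (L y + b)) x =
      ∑ i, fderiv ℝ (fderiv ℝ f) (L x + b) (L (basis2 i)) (L (basis2 i)) := by
  have hf1 : Differentiable ℝ f := hf.differentiable (by norm_num)
  have hf2 : Differentiable ℝ (fderiv ℝ f) :=
    (hf.fderiv_right (m := 1) (by norm_num)).differentiable (by norm_num)
  refine Finset.sum_congr rfl fun i _ => ?_
  simp only [fderiv_comp_affine_apply L b (hf1 _)]
  rw [fderiv_comp_affine_apply L b (h := fun z => fderiv ℝ f z (L (basis2 i)))
    ((hf2 _).clm_apply (differentiableAt_const _)), fderiv_apply_const_apply (hf2 _)]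

lemma lap_eq_sum_fderiv_fderiv {f : V2 → ℂ} (hf : ContDiff ℝ 2 f) (x : V2) :
    lap f x = ∑ i, fderiv ℝ (fderiv ℝ f) x (basis2 i) (basis2 i) := by
  simpa using lap_comp_affine hf (ContinuousLinearMap.id ℝ V2) 0 x

def rotRTL : V2 →L[ℝ] V2 :=
  LinearMap.toContinuousLinearMap
    { toFun := rotRT
      map_add' := fun x y => by ext i; fin_cases i <;> simp [rotRT, vec] <;> ring
      map_smul' := fun c x => by ext i; fin_cases i <;> simp [rotRT, vec] <;> ring }

@[simp]
lemma rotRTL_apply (x : V2) : rotRTL x = rotRT x := rfl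

lemma sqrt_three_mul_self : Real.sqrt 3 * Real.sqrt 3 = 3 := Real.mul_self_sqrt (by norm_num)

lemma rotRT_basis2_zero :
    rotRT (basis2 0) = (-(1/2 : ℝ)) • basis2 0 + (Real.sqrt 3 / 2) • basis2 1 := by
  ext i; fin_cases i <;> simp [rotRT, vec, basis2]

lemma rotRT_basis2_one :
    rotRT (basis2 1) = (-(Real.sqrt 3 / 2)) • basis2 0 + (-(1/2 : ℝ)) • basis2 1 := by
  ext i; fin_cases i <;> simp [rotRT, vec, basis2]

-- The mixed terms cancel, so `B` need not be symmetric.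
lemma sum_rotRT_basis2_bilin (B : V2 →L[ℝ] V2 →L[ℝ] ℂ) :
    ∑ i, B (rotRT (basis2 i)) (rotRT (basis2 i)) = ∑ i, B (basis2 i) (basis2 i) := by
  have hs : ((Real.sqrt 3 : ℝ) : ℂ) * ((Real.sqrt 3 : ℝ) : ℂ) = 3 := by
    exact_mod_cast sqrt_three_mul_self
  simp only [Fin.sum_univ_two, rotRT_basis2_zero, rotRT_basis2_one, map_add, map_smul,
    add_apply, smul_apply, Complex.real_smul]
  push_cast
  linear_combination (B (basis2 0) (basis2 0) / 4 + B (basis2 1) (basis2 1) / 4) * hs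

lemma rotRTL_add_const_eq (x : V2) : rotRTL x + (xc - rotRTL xc) = xc + rotRT (x - xc) := by
  simp only [← rotRTL_apply, map_sub]
  abel

lemma Rop_eq_comp_affine (f : V2 → ℂ) : Rop f = fun y => f (rotRTL y + (xc - rotRTL xc)) := by
  simp only [rotRTL_add_const_eq]
  rfl

lemma contDiff_Rop {f : V2 → ℂ} (hf : ContDiff ℝ 2 f) : ContDiff ℝ 2 (Rop f) := by
  rw [Rop_eq_comp_affine]
  exact hf.comp (rotRTL.contDiff.add contDiff_const)

lemma lap_Rop {f : V2 → ℂ} (hf : ContDiff ℝ 2 f) (x : V2) :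
    lap (Rop f) x = lap f (xc + rotRT (x - xc)) := by
  rw [Rop_eq_comp_affine, lap_comp_affine hf, rotRTL_add_const_eq, lap_eq_sum_fderiv_fderiv hf]
  simp only [rotRTL_apply, sum_rotRT_basis2_bilin]

lemma rotRT_lat (m : ℤ × ℤ) : rotRT (lat m) = lat (m.2, -m.1 - m.2) := by
  ext i; fin_cases i
  · simp [rotRT, lat, v1, v2, vec]; ring
  · simp [rotRT, lat, v1, v2, vec]
    linear_combination ((m.1 : ℝ) / 4 + (m.2 : ℝ) / 4) * sqrt_three_mul_self

lemma Rop_add_lat (f : V2 → ℂ) (x : V2) (m : ℤ × ℤ) :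
    Rop f (x + lat m) = f (xc + rotRT (x - xc) + lat (m.2, -m.1 - m.2)) := by
  rw [Rop, add_sub_right_comm, ← rotRTL_apply, map_add, rotRTL_apply, rotRTL_apply, rotRT_lat,
    add_assoc]

lemma dot_rotRT (a u : V2) : dot a (rotRT u) = dot (rotR a) u := by
  simp [dot, rotR, rotRT, vec]; ring

lemma rotR_add (a b : V2) : rotR (a + b) = rotR a + rotR b := by
  ext i; fin_cases i <;> simp [rotR, vec] <;> ring

lemma dot_add_left (a b u : V2) : dot (a + b) u = dot a u + dot b u := by
  simp [dot]; ring

lemma dot_dlat_lat (n m : ℤ × ℤ) :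
    dot (dlat n) (lat m) = ((n.1 * m.1 + n.2 * m.2 : ℤ) : ℝ) * (2 * π) := by
  simp [dot, dlat, lat, dk1, dk2, v1, v2, vec]
  field_simp
  ring

lemma exp_I_mul_dot_rotRT_lat {Kstar : V2} (hK : ∃ n : ℤ × ℤ, rotR Kstar - Kstar = dlat n)
    (κ : V2) (m : ℤ × ℤ) :
    Complex.exp (Complex.I * dot (Kstar + κ) (rotRT (lat m))) =
      Complex.exp (Complex.I * dot (Kstar + rotR κ) (lat m)) := by
  obtain ⟨n, hn⟩ := hK
  have hsplit : rotR (Kstar + κ) = (Kstar + rotR κ) + dlat n := by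
    rw [rotR_add, ← hn]; abel
  have hphase :
      Complex.exp (Complex.I * (((n.1 * m.1 + n.2 * m.2 : ℤ) : ℝ) * (2 * π) : ℝ)) = 1 := by
    rw [← Complex.exp_int_mul_two_pi_mul_I (n.1 * m.1 + n.2 * m.2)]
    push_cast
    ring_nf
  rw [dot_rotRT, hsplit, dot_add_left, dot_dlat_lat, Complex.ofReal_add, mul_add,
    Complex.exp_add, hphase, mul_one]

theorem statement9_general (V : V2 → ℝ)
    (hVR : ∀ x : V2, V (xc + rotRT (x - xc)) = V x)
    (Kstar : V2) (hK : ∃ m : ℤ × ℤ, rotR Kstar - Kstar = dlat m)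
    (κ : V2) (E : ℝ) (ψ : V2 → ℂ) (hψ : ContDiff ℝ 2 ψ)
    (heq : ∀ x : V2, -lap ψ x + (V x : ℂ) * ψ x = (E : ℂ) * ψ x)
    (hper : ∀ x : V2, ∀ m : ℤ × ℤ,
      ψ (x + lat m) = Complex.exp (Complex.I * (dot (Kstar + κ) (lat m))) * ψ x) :
    ContDiff ℝ 2 (Rop ψ) ∧
    (∀ x : V2, -lap (Rop ψ) x + (V x : ℂ) * Rop ψ x = (E : ℂ) * Rop ψ x) ∧
    (∀ x : V2, ∀ m : ℤ × ℤ,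
      Rop ψ (x + lat m) =
        Complex.exp (Complex.I * (dot (Kstar + rotR κ) (lat m))) * Rop ψ x) := by
  refine ⟨contDiff_Rop hψ, fun x => ?_, fun x m => ?_⟩
  · rw [lap_Rop hψ, ← hVR x]
    exact heq _
  · rw [Rop_add_lat, hper, ← rotRT_lat, exp_I_mul_dot_rotRT_lat hK]
    rfl

/-- Rotation by `2π/3` about `x_c` carries `(K⋆ + κ)`-pseudo-periodic
eigenfunctions of `−Δ + V` with eigenvalue `E` to `(K⋆ + Rκ)`-pseudo-periodic
eigenfunctions with the same eigenvalue. -/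
theorem statement9 (V : V2 → ℝ) (hVc : Continuous V)
    (hVR : ∀ x : V2, V (xc + rotRT (x - xc)) = V x)
    (Kstar : V2) (hK : ∃ m : ℤ × ℤ, rotR Kstar - Kstar = dlat m)
    (κ : V2) (E : ℝ) (ψ : V2 → ℂ) (hψ : ContDiff ℝ 2 ψ)
    (heq : ∀ x : V2, -lap ψ x + (V x : ℂ) * ψ x = (E : ℂ) * ψ x)
    (hper : ∀ x : V2, ∀ m : ℤ × ℤ,
      ψ (x + lat m) = Complex.exp (Complex.I * (dot (Kstar + κ) (lat m))) * ψ x) :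
    ContDiff ℝ 2 (Rop ψ) ∧
    (∀ x : V2, -lap (Rop ψ) x + (V x : ℂ) * Rop ψ x = (E : ℂ) * Rop ψ x) ∧
    (∀ x : V2, ∀ m : ℤ × ℤ,
      Rop ψ (x + lat m) =
        Complex.exp (Complex.I * (dot (Kstar + rotR κ) (lat m))) * Rop ψ x) :=
  statement9_general V hVR Kstar hK κ E ψ hψ heq hper
end
end
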